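/- In the depth-2 Jones tower setup, define E_B : C → B by E_B(c) := ∑ⱼ F(c uⱼ) vⱼ. Then E_B is a conditional expectation onto B: E_B(b) = b for all b ∈ B (in particular E_B(1) = 1), E_B(b c b') = b E_B(c) b' for all b, b' ∈ B and c ∈ C (B-bimodule map), E_B(b e₁ b') = λ b b' for all b, b' ∈ B, and E_B is faithful: if E_B(Cc) = 0 then c = 0. -/

import Mathlib

open scoped TensorProduct

/-- The depth-2 Jones tower setup: a tower `N ⊆ M ⊆ M₁ ⊆ R` (with `R` playing the
role of `M₂`) of unital `k`-algebras, with conditional expectations, Jones idempotents,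
braid-like relations and depth-2 orthogonal dual bases, as in the paper. -/
structure JonesTower (k : Type*) [Field k] (R : Type*) [Ring R] [Algebra k R] where
  N : Subalgebra k R
  M : Subalgebra k R
  M₁ : Subalgebra k R
  hNM : N ≤ M
  hMM₁ : M ≤ M₁
  lam : k
  hlam : lam ≠ 0
  E : R →ₗ[k] R
  EM : R →ₗ[k] R
  EM1 : R →ₗ[k] R
  hE_mem : ∀ m ∈ M, E m ∈ N
  hEM_mem : ∀ x ∈ M₁, EM x ∈ M
  hEM1_mem : ∀ x : R, EM1 x ∈ M₁
  hE_one : E 1 = 1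
  hEM_one : EM 1 = 1
  hEM1_one : EM1 1 = 1
  hE_bimod : ∀ n ∈ N, ∀ n' ∈ N, ∀ m ∈ M, E (n * m * n') = n * E m * n'
  hEM_bimod : ∀ m ∈ M, ∀ m' ∈ M, ∀ x ∈ M₁, EM (m * x * m') = m * EM x * m'
  hEM1_bimod : ∀ w ∈ M₁, ∀ w' ∈ M₁, ∀ x : R, EM1 (w * x * w') = w * EM1 x * w'
  n₀ : ℕ
  xb : Fin n₀ → R
  yb : Fin n₀ → R
  hxb : ∀ i, xb i ∈ M
  hyb : ∀ i, yb i ∈ M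
  hE_dual₁ : ∀ m ∈ M, ∑ i, E (m * xb i) * yb i = m
  hE_dual₂ : ∀ m ∈ M, ∑ i, xb i * E (yb i * m) = m
  hE_index : ∑ i, xb i * yb i = lam⁻¹ • (1 : R)
  hCMN : ∀ c ∈ M, (∀ n ∈ N, c * n = n * c) → ∃ μ : k, c = μ • (1 : R)
  hCM₁M : ∀ c ∈ M₁, (∀ m ∈ M, c * m = m * c) → ∃ μ : k, c = μ • (1 : R)
  hCM₂M₁ : ∀ c : R, (∀ w ∈ M₁, c * w = w * c) → ∃ μ : k, c = μ • (1 : R)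
  e₁ : R
  e₂ : R
  he₁ : e₁ ∈ M₁
  he₁N : ∀ n ∈ N, e₁ * n = n * e₁
  he₂M : ∀ m ∈ M, e₂ * m = m * e₂
  he₁me₁ : ∀ m ∈ M, e₁ * m * e₁ = E m * e₁
  he₂we₂ : ∀ w ∈ M₁, e₂ * w * e₂ = EM w * e₂
  hEMe₁ : EM e₁ = lam • (1 : R)
  hEM1e₂ : EM1 e₂ = lam • (1 : R)
  hspanM₁ : Subalgebra.toSubmodule M₁ =
    Submodule.span k {x : R | ∃ m ∈ M, ∃ m' ∈ M, x = m * e₁ * m'}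
  hspanM₂ : (⊤ : Submodule k R) =
    Submodule.span k {x : R | ∃ w ∈ M₁, ∃ w' ∈ M₁, x = w * e₂ * w'}
  hbraid₁ : e₁ * e₂ * e₁ = lam • e₁
  hbraid₂ : e₂ * e₁ * e₂ = lam • e₂
  r : ℕ
  zb : Fin r → R
  wb : Fin r → R
  hzbM₁ : ∀ i, zb i ∈ M₁
  hwbM₁ : ∀ i, wb i ∈ M₁
  hzbN : ∀ i, ∀ n ∈ N, zb i * n = n * zb i
  hwbN : ∀ i, ∀ n ∈ N, wb i * n = n * wb i
  hzw_orth : ∀ i j, EM (wb i * zb j) = if i = j then (1 : R) else 0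
  hzw_dual₁ : ∀ x ∈ M₁, ∑ i, EM (x * zb i) * wb i = x
  hzw_dual₂ : ∀ x ∈ M₁, ∑ i, zb i * EM (wb i * x) = x
  hzw_index : ∑ i, zb i * wb i = lam⁻¹ • (1 : R)
  s : ℕ
  ub : Fin s → R
  vb : Fin s → R
  hubM : ∀ i, ∀ m ∈ M, ub i * m = m * ub i
  hvbM : ∀ i, ∀ m ∈ M, vb i * m = m * vb i
  huv_orth : ∀ i j, EM1 (vb i * ub j) = if i = j then (1 : R) else 0
  huv_dual₁ : ∀ x : R, ∑ i, EM1 (x * ub i) * vb i = x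
  huv_dual₂ : ∀ x : R, ∑ i, ub i * EM1 (vb i * x) = x
  huv_index : ∑ i, ub i * vb i = lam⁻¹ • (1 : R)
  F : R →ₗ[k] k
  hF : ∀ c : R, (∀ n ∈ N, c * n = n * c) → algebraMap k R (F c) = EM (EM1 c)

variable {k : Type*} [Field k] {R : Type*} [Ring R] [Algebra k R]

/-- The second centralizer `A = C_{M₁}(N)`. -/
def JonesTower.A (T : JonesTower k R) : Subalgebra k R :=
  T.M₁ ⊓ Subalgebra.centralizer k (T.N : Set R)

/-- The second centralizer `B = C_{M₂}(M)`. -/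
def JonesTower.B (T : JonesTower k R) : Subalgebra k R :=
  Subalgebra.centralizer k (T.M : Set R)

/-- The big centralizer `C = C_{M₂}(N)`. -/
def JonesTower.C (T : JonesTower k R) : Subalgebra k R :=
  Subalgebra.centralizer k (T.N : Set R)

/-!
Every `E_B(b a u)` with `a ∈ A` and `b, u ∈ B` equals `E_M(a) b u`: the `k`-valued coefficient
`F(b a u uⱼ)` of `vⱼ` is `E_M(E_{M₁}(b a u uⱼ))`, and `a ↦ E_M(E_{M₁}(b a u))` is an
`M`-bimodule map on `M₁ = span M e₁ M`, so it is determined by its value at `e₁`. That value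
comes from the Pimsner–Popa sum `∑ᵢ xᵢ a yᵢ = λ⁻¹ E_M(a)` for `a ∈ A` (the sum commutes with
`M`, hence is a scalar), which gives `∑ᵢ xᵢ e₁ yᵢ = 1` and so `b u = ∑ᵢ xᵢ (b e₁ u) yᵢ`.
All properties of `E_B` except faithfulness are instances of this formula, via
`c = ∑ⱼ E_{M₁}(c uⱼ) vⱼ`.
-/

open Finset

namespace JonesTower

variable (T : JonesTower k R)

lemma mem_C_iff {c : R} : c ∈ T.C ↔ ∀ n ∈ T.N, c * n = n * c :=
  ⟨fun h n hn => ((Subalgebra.mem_centralizer_iff k).1 h n hn).symm,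
    fun h => (Subalgebra.mem_centralizer_iff k).2 fun n hn => (h n hn).symm⟩

lemma mem_B_iff {b : R} : b ∈ T.B ↔ ∀ m ∈ T.M, b * m = m * b :=
  ⟨fun h m hm => ((Subalgebra.mem_centralizer_iff k).1 h m hm).symm,
    fun h => (Subalgebra.mem_centralizer_iff k).2 fun m hm => (h m hm).symm⟩

lemma B_le_C : T.B ≤ T.C :=
  Subalgebra.centralizer_le k _ _ (SetLike.coe_subset_coe.2 T.hNM)

lemma ub_mem_B (j : Fin T.s) : T.ub j ∈ T.B := T.mem_B_iff.2 (T.hubM j)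

lemma vb_mem_B (j : Fin T.s) : T.vb j ∈ T.B := T.mem_B_iff.2 (T.hvbM j)

lemma wb_mem_C (i : Fin T.r) : T.wb i ∈ T.C := T.mem_C_iff.2 (T.hwbN i)

lemma e₁_mem_A : T.e₁ ∈ T.A := ⟨T.he₁, T.mem_C_iff.2 T.he₁N⟩

lemma algebraMap_F_of_mem_C {c : R} (hc : c ∈ T.C) :
    algebraMap k R (T.F c) = T.EM (T.EM1 c) :=
  T.hF c (T.mem_C_iff.1 hc)

lemma EM1_mem_mul {w : R} (hw : w ∈ T.M₁) (x : R) : T.EM1 (w * x) = w * T.EM1 x := by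
  simpa using T.hEM1_bimod w hw 1 (one_mem _) x

lemma EM1_mul_mem {w : R} (hw : w ∈ T.M₁) (x : R) : T.EM1 (x * w) = T.EM1 x * w := by
  simpa using T.hEM1_bimod 1 (one_mem _) w hw x

lemma EM_mem_mul {m x : R} (hm : m ∈ T.M) (hx : x ∈ T.M₁) : T.EM (m * x) = m * T.EM x := by
  simpa using T.hEM_bimod m hm 1 (one_mem _) x hx

lemma EM_mul_mem {m x : R} (hm : m ∈ T.M) (hx : x ∈ T.M₁) : T.EM (x * m) = T.EM x * m := by
  simpa using T.hEM_bimod 1 (one_mem _) m hm x hx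

lemma EM1_mul_comm {x w : R} (hw : w ∈ T.M₁) (h : x * w = w * x) :
    T.EM1 x * w = w * T.EM1 x := by
  rw [← T.EM1_mul_mem hw, ← T.EM1_mem_mul hw, h]

lemma EM_mul_comm {a m : R} (ha : a ∈ T.M₁) (hm : m ∈ T.M) (h : a * m = m * a) :
    T.EM a * m = m * T.EM a := by
  rw [← T.EM_mul_mem hm ha, ← T.EM_mem_mul hm ha, h]

lemma EM1_mem_A {c : R} (hc : c ∈ T.C) : T.EM1 c ∈ T.A :=
  ⟨T.hEM1_mem c, T.mem_C_iff.2 fun n hn =>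
    T.EM1_mul_comm (T.hMM₁ (T.hNM hn)) (T.mem_C_iff.1 hc n hn)⟩

lemma exists_EM_eq_smul_one {a : R} (ha : a ∈ T.A) : ∃ ν : k, T.EM a = ν • (1 : R) :=
  T.hCMN _ (T.hEM_mem a ha.1) fun n hn =>
    T.EM_mul_comm ha.1 (T.hNM hn) (T.mem_C_iff.1 ha.2 n hn)

lemma mul_sum_xb_mul_mul_yb_comm {a m : R} (ha : a ∈ T.C) (hm : m ∈ T.M) :
    m * ∑ i, T.xb i * a * T.yb i = (∑ i, T.xb i * a * T.yb i) * m := by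
  calc m * ∑ i, T.xb i * a * T.yb i
      = ∑ i, ∑ j, T.xb j * T.E (T.yb j * m * T.xb i) * a * T.yb i := by
        rw [mul_sum]
        refine sum_congr rfl fun i _ => ?_
        rw [← mul_assoc, ← mul_assoc, ← T.hE_dual₂ _ (mul_mem hm (T.hxb i)), sum_mul, sum_mul]
        simp only [mul_assoc]
    _ = ∑ j, ∑ i, T.xb j * a * (T.E (T.yb j * m * T.xb i) * T.yb i) := by
        rw [sum_comm]
        refine sum_congr rfl fun j _ => sum_congr rfl fun i _ => ?_
        have hE : T.E (T.yb j * m * T.xb i) ∈ T.N :=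
          T.hE_mem _ (mul_mem (mul_mem (T.hyb j) hm) (T.hxb i))
        rw [mul_assoc (T.xb j), ← T.mem_C_iff.1 ha _ hE]
        simp only [mul_assoc]
    _ = (∑ i, T.xb i * a * T.yb i) * m := by
        rw [sum_mul]
        refine sum_congr rfl fun j _ => ?_
        rw [← mul_sum, T.hE_dual₁ _ (mul_mem (T.hyb j) hm)]
        simp only [mul_assoc]

-- `∑ᵢ xᵢ a yᵢ` lies in `C_{M₁}(M) = k`, so it is fixed by `E_M`, which moves `a` outside.
lemma sum_xb_mul_mul_yb {a : R} (ha : a ∈ T.A) :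
    ∑ i, T.xb i * a * T.yb i = T.lam⁻¹ • T.EM a := by
  have hM₁ : ∑ i, T.xb i * a * T.yb i ∈ T.M₁ :=
    sum_mem fun i _ => mul_mem (mul_mem (T.hMM₁ (T.hxb i)) ha.1) (T.hMM₁ (T.hyb i))
  obtain ⟨μ, hμ⟩ :=
    T.hCM₁M _ hM₁ fun m hm => (T.mul_sum_xb_mul_mul_yb_comm ha.2 hm).symm
  obtain ⟨ν, hν⟩ := T.exists_EM_eq_smul_one ha
  calc ∑ i, T.xb i * a * T.yb i
      = T.EM (∑ i, T.xb i * a * T.yb i) := by rw [hμ, map_smul, T.hEM_one]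
    _ = ∑ i, T.xb i * T.EM a * T.yb i := by
        rw [map_sum]
        exact sum_congr rfl fun i _ => T.hEM_bimod _ (T.hxb i) _ (T.hyb i) a ha.1
    _ = T.lam⁻¹ • T.EM a := by
        simp only [hν, mul_smul_comm, smul_mul_assoc, mul_one, ← smul_sum, T.hE_index,
          smul_smul, mul_comm]

lemma sum_xb_mul_e₁_mul_yb : ∑ i, T.xb i * T.e₁ * T.yb i = 1 := by
  rw [T.sum_xb_mul_mul_yb T.e₁_mem_A, T.hEMe₁, smul_smul, inv_mul_cancel₀ T.hlam, one_smul]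

lemma mul_sum_xb_mul_mul_yb_mul {b u : R} (hb : b ∈ T.B) (hu : u ∈ T.B) (x : R) :
    b * (∑ i, T.xb i * x * T.yb i) * u = ∑ i, T.xb i * (b * x * u) * T.yb i := by
  rw [mul_sum, sum_mul]
  refine sum_congr rfl fun i _ => ?_
  calc b * (T.xb i * x * T.yb i) * u = (b * T.xb i) * x * (T.yb i * u) := by
        simp only [mul_assoc]
    _ = T.xb i * (b * x * u) * T.yb i := by
        rw [T.mem_B_iff.1 hb _ (T.hxb i), ← T.mem_B_iff.1 hu _ (T.hyb i)]
        simp only [mul_assoc]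

lemma lam_smul_EM1_mul {b u : R} (hb : b ∈ T.B) (hu : u ∈ T.B) :
    T.lam • T.EM1 (b * u) = T.EM (T.EM1 (b * T.e₁ * u)) := by
  have hC : b * T.e₁ * u ∈ T.C :=
    mul_mem (mul_mem (T.B_le_C hb) T.e₁_mem_A.2) (T.B_le_C hu)
  calc T.lam • T.EM1 (b * u)
      = T.lam • T.EM1 (b * (∑ i, T.xb i * T.e₁ * T.yb i) * u) := by
        rw [T.sum_xb_mul_e₁_mul_yb, mul_one]
    _ = T.lam • ∑ i, T.xb i * T.EM1 (b * T.e₁ * u) * T.yb i := by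
        rw [T.mul_sum_xb_mul_mul_yb_mul hb hu, map_sum]
        congr 1
        exact sum_congr rfl fun i _ =>
          T.hEM1_bimod _ (T.hMM₁ (T.hxb i)) _ (T.hMM₁ (T.hyb i)) _
    _ = T.EM (T.EM1 (b * T.e₁ * u)) := by
        rw [T.sum_xb_mul_mul_yb (T.EM1_mem_A hC), smul_smul, mul_inv_cancel₀ T.hlam,
          one_smul]

-- Both sides are `M`-bimodule maps in `a`, so it suffices to compare them on `e₁`.
lemma EM_EM1_mul_mul {a b u : R} (hb : b ∈ T.B) (hu : u ∈ T.B) (ha : a ∈ T.M₁) :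
    T.EM (T.EM1 (b * a * u)) = T.EM a * T.EM1 (b * u) := by
  let f : R →ₗ[k] R :=
    T.EM ∘ₗ T.EM1 ∘ₗ LinearMap.mulLeft k b ∘ₗ LinearMap.mulRight k u
  let g : R →ₗ[k] R := LinearMap.mulRight k (T.EM1 (b * u)) ∘ₗ T.EM
  have hspan : a ∈ Submodule.span k {x : R | ∃ m ∈ T.M, ∃ m' ∈ T.M, x = m * T.e₁ * m'} := by
    rw [← T.hspanM₁]; exact ha
  have hfg : Set.EqOn f g {x : R | ∃ m ∈ T.M, ∃ m' ∈ T.M, x = m * T.e₁ * m'} := by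
    rintro _ ⟨m, hm, m', hm', rfl⟩
    have hcomm : T.EM1 (b * u) * m' = m' * T.EM1 (b * u) :=
      T.EM1_mul_comm (T.hMM₁ hm') (T.mem_B_iff.1 (mul_mem hb hu) m' hm')
    have hmove : b * (m * T.e₁ * m' * u) = m * (b * T.e₁ * u) * m' := by
      calc b * (m * T.e₁ * m' * u) = b * m * T.e₁ * (m' * u) := by simp only [mul_assoc]
        _ = m * b * T.e₁ * (u * m') := by
          rw [T.mem_B_iff.1 hb m hm, T.mem_B_iff.1 hu m' hm']
        _ = m * (b * T.e₁ * u) * m' := by simp only [mul_assoc]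
    simp only [f, g, LinearMap.comp_apply, LinearMap.mulLeft_apply, LinearMap.mulRight_apply]
    rw [hmove, T.hEM1_bimod _ (T.hMM₁ hm) _ (T.hMM₁ hm'),
      T.hEM_bimod _ hm _ hm' _ (T.hEM1_mem _), ← T.lam_smul_EM1_mul hb hu,
      T.hEM_bimod _ hm _ hm' _ T.he₁, T.hEMe₁]
    simp only [smul_mul_assoc, mul_smul_comm, mul_one, mul_assoc, hcomm]
  simpa only [f, g, LinearMap.comp_apply, LinearMap.mulLeft_apply, LinearMap.mulRight_apply,
    mul_assoc] using LinearMap.eqOn_span hfg hspan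

def condExpB : R →ₗ[k] R :=
  ∑ j, (T.F ∘ₗ LinearMap.mulRight k (T.ub j)).smulRight (T.vb j)

lemma condExpB_apply (x : R) : T.condExpB x = ∑ j, T.F (x * T.ub j) • T.vb j := by
  simp [condExpB]

lemma condExpB_mem_B (x : R) : T.condExpB x ∈ T.B := by
  rw [condExpB_apply]
  exact sum_mem fun j _ => Subalgebra.smul_mem _ (T.vb_mem_B j) _

lemma condExpB_mul_mul {a b u : R} (ha : a ∈ T.A) (hb : b ∈ T.B) (hu : u ∈ T.B) :
    T.condExpB (b * a * u) = T.EM a * (b * u) := by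
  have hcoef : ∀ j, T.F (b * a * u * T.ub j) • T.vb j
      = T.EM a * (T.EM1 (b * u * T.ub j) * T.vb j) := by
    intro j
    have hC : b * a * (u * T.ub j) ∈ T.C :=
      mul_mem (mul_mem (T.B_le_C hb) ha.2) (T.B_le_C (mul_mem hu (T.ub_mem_B j)))
    rw [Algebra.smul_def, mul_assoc (b * a), T.algebraMap_F_of_mem_C hC,
      T.EM_EM1_mul_mul hb (mul_mem hu (T.ub_mem_B j)) ha.1, mul_assoc b u, mul_assoc]
  conv_rhs => rw [← T.huv_dual₁ (b * u)]
  rw [condExpB_apply, mul_sum]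
  exact sum_congr rfl fun j _ => hcoef j

lemma condExpB_of_mem_B {b : R} (hb : b ∈ T.B) : T.condExpB b = b := by
  simpa [T.hEM_one] using T.condExpB_mul_mul (one_mem T.A) (one_mem T.B) hb

lemma condExpB_mul_e₁_mul {b b' : R} (hb : b ∈ T.B) (hb' : b' ∈ T.B) :
    T.condExpB (b * T.e₁ * b') = T.lam • (b * b') := by
  rw [T.condExpB_mul_mul T.e₁_mem_A hb hb', T.hEMe₁, smul_mul_assoc, one_mul]

lemma condExpB_mul_mul_of_mem_C {b b' c : R} (hb : b ∈ T.B) (hb' : b' ∈ T.B) (hc : c ∈ T.C) :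
    T.condExpB (b * c * b') = b * T.condExpB c * b' := by
  have hcu : ∀ j, c * T.ub j ∈ T.C := fun j => mul_mem hc (T.B_le_C (T.ub_mem_B j))
  conv_lhs => rw [← T.huv_dual₁ c, mul_sum, sum_mul, map_sum]
  rw [condExpB_apply, mul_sum, sum_mul]
  refine sum_congr rfl fun j _ => ?_
  rw [← mul_assoc b, mul_assoc (b * _), T.condExpB_mul_mul (T.EM1_mem_A (hcu j)) hb
    (mul_mem (T.vb_mem_B j) hb'), ← T.algebraMap_F_of_mem_C (hcu j), ← Algebra.smul_def,
    mul_smul_comm, smul_mul_assoc, mul_assoc]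

lemma EM1_condExpB_mul_ub (x : R) (j : Fin T.s) :
    T.EM1 (T.condExpB x * T.ub j) = T.F (x * T.ub j) • (1 : R) := by
  simp only [condExpB_apply, sum_mul, map_sum, smul_mul_assoc, map_smul, T.huv_orth,
    smul_ite, smul_zero, sum_ite_eq', mem_univ, if_true]

-- Orthogonality of `(uⱼ, vⱼ)` recovers each `F(wᵢ c uⱼ)` from `E_B(wᵢ c)`; these are the
-- coefficients of `E_{M₁}(c uⱼ)` in the basis `zᵢ`, and those of `c` in the basis `vⱼ`.
lemma eq_zero_of_forall_condExpB_mul_eq_zero {c : R} (hc : c ∈ T.C)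
    (h : ∀ c' ∈ T.C, T.condExpB (c' * c) = 0) : c = 0 := by
  have hEM : ∀ i j, T.EM (T.wb i * T.EM1 (c * T.ub j)) = 0 := by
    intro i j
    have hC : T.wb i * c * T.ub j ∈ T.C :=
      mul_mem (mul_mem (T.wb_mem_C i) hc) (T.B_le_C (T.ub_mem_B j))
    rw [← T.EM1_mem_mul (T.hwbM₁ i), ← mul_assoc, ← T.algebraMap_F_of_mem_C hC,
      Algebra.algebraMap_eq_smul_one, ← EM1_condExpB_mul_ub, h _ (T.wb_mem_C i), zero_mul,
      map_zero]
  have hEM1 : ∀ j, T.EM1 (c * T.ub j) = 0 := by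
    intro j
    rw [← T.hzw_dual₂ _ (T.hEM1_mem _)]
    exact sum_eq_zero fun i _ => by rw [hEM i j, mul_zero]
  rw [← T.huv_dual₁ c]
  exact sum_eq_zero fun j _ => by rw [hEM1 j, zero_mul]

end JonesTower

theorem conditional_expectation_onto_B_general (T : JonesTower k R)
    (EB : R → R) (hEB : ∀ c : R, EB c = ∑ j, T.F (c * T.ub j) • T.vb j) :
    (∀ c ∈ T.C, EB c ∈ T.B) ∧
    (∀ b ∈ T.B, EB b = b) ∧
    (∀ b ∈ T.B, ∀ b' ∈ T.B, ∀ c ∈ T.C, EB (b * c * b') = b * EB c * b') ∧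
    (∀ b ∈ T.B, ∀ b' ∈ T.B, EB (b * T.e₁ * b') = T.lam • (b * b')) ∧
    (∀ c ∈ T.C, (∀ c' ∈ T.C, EB (c' * c) = 0) → c = 0) := by
  obtain rfl : EB = T.condExpB := funext fun c => (hEB c).trans (T.condExpB_apply c).symm
  exact ⟨fun c _ => T.condExpB_mem_B c,
    fun b hb => T.condExpB_of_mem_B hb,
    fun b hb b' hb' c hc => T.condExpB_mul_mul_of_mem_C hb hb' hc,
    fun b hb b' hb' => T.condExpB_mul_e₁_mul hb hb',
    fun c hc => T.eq_zero_of_forall_condExpB_mul_eq_zero hc⟩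

/-- The map `E_B : C → B`, `E_B(c) = ∑ⱼ F(c uⱼ) vⱼ`, is a conditional expectation
onto `B`: it takes values in `B`, restricts to the identity on `B`, is a
`B`-bimodule map, satisfies `E_B(b e₁ b') = λ b b'`, and is faithful. -/
theorem conditional_expectation_onto_B (T : JonesTower k R) [Nontrivial R]
    (EB : R → R) (hEB : ∀ c : R, EB c = ∑ j, T.F (c * T.ub j) • T.vb j) :
    (∀ c ∈ T.C, EB c ∈ T.B) ∧
    (∀ b ∈ T.B, EB b = b) ∧
    (∀ b ∈ T.B, ∀ b' ∈ T.B, ∀ c ∈ T.C, EB (b * c * b') = b * EB c * b') ∧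
    (∀ b ∈ T.B, ∀ b' ∈ T.B, EB (b * T.e₁ * b') = T.lam • (b * b')) ∧
    (∀ c ∈ T.C, (∀ c' ∈ T.C, EB (c' * c) = 0) → c = 0) :=
  conditional_expectation_onto_B_general T EB hEB
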